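/- Let X be a complex separable Fréchet space, T : X → X a continuous linear operator, and P a family of finite positive Borel measures on 𝕋 which is hereditary with respect to absolute continuity (if σ ∈ P and σ' is a finite positive Borel measure with σ' absolutely continuous with respect to σ, then σ' ∈ P). Call D ⊆ 𝕋 P-small if σ(D) = 0 (outer measure) for every σ ∈ P, and call a closed set Λ ⊆ 𝕋 P-perfect if V ∩ Λ is not P-small for every open V ⊆ 𝕋 with V ∩ Λ ≠ ∅. Then the following are equivalent: (i) for every analytic P-small set D ⊆ 𝕋, the linear span of ⋃_{λ ∈ 𝕋∖D} ker(T − λ·id) is dense in X; (ii) there exists a countable family of continuous maps E_i : Λ_i → X (i ∈ ℕ), where each Λ_i ⊆ 𝕋 is a closed P-perfect set, such that T(E_i(λ)) = λ·E_i(λ) for all i and λ ∈ Λ_i, and the linear span of ⋃_i E_i(Λ_i) is dense in X. -/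

import Mathlib

/-!
(ii) ⇒ (i): a `P`-perfect set minus a `P`-small set is dense in it, so by continuity every
value of a field `E i` is a limit of eigenvectors whose eigenvalues avoid `D`.

(i) ⇒ (ii): for a basic open set `U ⊆ X` let `A U ⊆ 𝕋` be the set of eigenvalues having an
eigenvector in `U`; it is analytic. The union `D` of the `P`-small sets `A U` is analytic and
`P`-small, so by (i) the eigenvectors with eigenvalue off `D` span a dense subspace. When `A U`
is not `P`-small, choose `σ ∈ P` with `σ (A U) > 0`. The eigenpairs `(z, x)` with `x ∈ U` form a
continuous image of Baire space, and capacitability gives a compact piece of it whose projection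
still has positive measure. Cutting that piece into finitely many parts on which `x` varies by
less than `1 / n`, at a summable cost in measure, leaves the graph of a continuous eigenvector
field over a compact `K` with `σ K > 0`; deleting from `K` its relatively open `P`-small parts
leaves a `P`-perfect set `Λ`. The values of these fields approximate every eigenvector with
eigenvalue off `D`.
-/

open MeasureTheory Filter Topology

noncomputable instance : MeasurableSpace Circle := borel Circle
instance : BorelSpace Circle := ⟨rfl⟩

/-- `D` is `P`-small: it is annihilated by every measure of the family `P`. -/
def PSmall (P : Set (Measure Circle)) (D : Set Circle) : Prop :=
  ∀ σ ∈ P, σ D = 0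

/-- A closed set `Λ ⊆ 𝕋` is `P`-perfect if `V ∩ Λ` is not `P`-small for any open `V`
meeting `Λ`. -/
def PPerfect (P : Set (Measure Circle)) (Λ : Set Circle) : Prop :=
  ∀ V : Set Circle, IsOpen V → (V ∩ Λ).Nonempty → ¬ PSmall P (V ∩ Λ)

open Set
open scoped ENNReal

section PSmall

variable {P : Set (Measure Circle)}

lemma PSmall.mono {D D' : Set Circle} (hD : PSmall P D) (h : D' ⊆ D) : PSmall P D' :=
  fun σ hσ => measure_mono_null h (hD σ hσ)

lemma PSmall.union {D D' : Set Circle} (hD : PSmall P D) (hD' : PSmall P D') :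
    PSmall P (D ∪ D') :=
  fun σ hσ => measure_union_null (hD σ hσ) (hD' σ hσ)

lemma pSmall_iUnion {ι : Sort*} [Countable ι] {D : ι → Set Circle} (hD : ∀ i, PSmall P (D i)) :
    PSmall P (⋃ i, D i) :=
  fun σ hσ => measure_iUnion_null fun i => hD i σ hσ

lemma pPerfect_empty : PPerfect P ∅ := fun _ _ h => by simp at h

lemma PPerfect.subset_closure_sdiff {Λ D : Set Circle} (hΛ : PPerfect P Λ) (hD : PSmall P D) :
    Λ ⊆ closure (Λ \ D) := by
  intro z hz
  rw [mem_closure_iff]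
  intro V hV hzV
  obtain ⟨w, ⟨hwV, hwΛ⟩, hwD⟩ := not_subset.1 fun h => hΛ V hV ⟨z, hzV, hz⟩ (hD.mono h)
  exact ⟨w, hwV, hwΛ, hwD⟩

/-- The `P`-perfect kernel: remove from `K` the basic open sets that meet it in a `P`-small set. -/
lemma exists_pPerfect_subset {σ : Measure Circle} (hσ : σ ∈ P) {K : Set Circle} (hK : IsClosed K)
    (hσK : σ K ≠ 0) : ∃ Λ ⊆ K, IsClosed Λ ∧ PPerfect P Λ ∧ Λ.Nonempty := by
  obtain ⟨b, hb⟩ := TopologicalSpace.exists_seq_basis Circle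
  set Λ := K \ ⋃ n : {n // PSmall P (b n ∩ K)}, b n
  have hsmall : PSmall P (K \ Λ) := by
    refine (pSmall_iUnion fun n : {n // PSmall P (b n ∩ K)} => n.2).mono ?_
    rintro z ⟨hzK, hzΛ⟩
    obtain ⟨n, hzn⟩ := mem_iUnion.1 (not_not.1 fun h => hzΛ ⟨hzK, h⟩)
    exact mem_iUnion.2 ⟨n, hzn, hzK⟩
  refine ⟨Λ, sdiff_subset, hK.sdiff (isOpen_iUnion fun n => hb.isOpen (mem_range_self _)), ?_, ?_⟩
  · rintro V hV ⟨z, hzV, hzK, hzΛ⟩ hVΛ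
    obtain ⟨_, ⟨n, rfl⟩, hzn, hnV⟩ := hb.exists_subset_of_mem_open hzV hV
    have hn : PSmall P (b n ∩ K) := (hVΛ.union hsmall).mono fun w ⟨hwn, hwK⟩ =>
      (em (w ∈ Λ)).imp (fun h => ⟨hnV hwn, h⟩) fun h => ⟨hwK, h⟩
    exact hzΛ (mem_iUnion.2 ⟨⟨n, hn⟩, hzn⟩)
  · have hσΛ : σ K = σ Λ := by
      rw [← measure_sdiff_null (hsmall σ hσ), sdiff_sdiff_cancel_left (sdiff_subset : Λ ⊆ K)]
    exact nonempty_of_measure_ne_zero (hσΛ ▸ hσK)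

end PSmall

lemma dense_span_of_subset_closure_span {R M : Type*} [Semiring R] [AddCommMonoid M] [Module R M]
    [TopologicalSpace M] [ContinuousAdd M] [ContinuousConstSMul R M] {S S' : Set M}
    (hS' : Dense (Submodule.span R S' : Set M)) (h : S' ⊆ closure (Submodule.span R S)) :
    Dense (Submodule.span R S : Set M) := by
  rw [← Submodule.topologicalClosure_coe] at h
  rw [← dense_closure, ← Submodule.topologicalClosure_coe]
  exact hS'.mono (Submodule.span_le.2 h)

section Capacity

variable {α : Type*} [MeasurableSpace α]

/-- Choosing the bounds `M 0, M 1, …` one at a time, by continuity of `σ` along increasing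
unions, keeps the images of the boxes above `c`. -/
lemma exists_lt_measure_image_box (σ : Measure α) (g : (ℕ → ℕ) → α) {c : ℝ≥0∞}
    (hc : c < σ (range g)) : ∃ M : ℕ → ℕ, ∀ n, c < σ (g '' {β | ∀ k < n, β k ≤ M k}) := by
  have hstep : ∀ (S : Set (ℕ → ℕ)) (n : ℕ), ∃ m,
      c < σ (g '' S) → c < σ (g '' (S ∩ {β | β n ≤ m})) := by
    intro S n
    by_cases hS : c < σ (g '' S)
    · have hmono : Monotone fun m => g '' (S ∩ {β | β n ≤ m}) := fun a b hab =>
        image_mono (inter_subset_inter_right _ fun β hβ => le_trans hβ hab)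
      have hunion : ⋃ m, g '' (S ∩ {β | β n ≤ m}) = g '' S := by
        rw [← image_iUnion, ← inter_iUnion,
          iUnion_eq_univ_iff.2 fun β => ⟨β n, mem_ofPred.2 le_rfl⟩, inter_univ]
      have hlim := tendsto_measure_iUnion_atTop (μ := σ) hmono
      rw [hunion] at hlim
      obtain ⟨m, hm⟩ := (hlim.eventually (eventually_gt_nhds hS)).exists
      exact ⟨m, fun _ => hm⟩
    · exact ⟨0, fun h => (hS h).elim⟩
  choose m hm using hstep
  let S : ℕ → Set (ℕ → ℕ) := fun n => Nat.rec univ (fun n S => S ∩ {β | β n ≤ m S n}) n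
  have hS : ∀ n, S n = {β | ∀ k < n, β k ≤ m (S k) k} := by
    intro n
    induction n with
    | zero => simp [S]
    | succ n ih =>
      change S n ∩ _ = _
      simp only [Nat.forall_lt_succ_right, ofPred_and, ← ih]
      rfl
  refine ⟨fun k => m (S k) k, fun n => ?_⟩
  rw [← hS]
  induction n with
  | zero => simpa [S] using hc
  | succ n ih => exact hm (S n) n ih

lemma exists_box_subset_of_isOpen (M : ℕ → ℕ) {U : Set (ℕ → ℕ)} (hU : IsOpen U)
    (hMU : Icc 0 M ⊆ U) : ∃ n, {β : ℕ → ℕ | ∀ k < n, β k ≤ M k} ⊆ U := by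
  by_contra! h
  choose β hβ hβU using fun n => not_subset.1 (h n)
  obtain ⟨a, ha, θ, hθ, hlim⟩ := (isCompact_Icc (a := 0) (b := M)).tendsto_subseq
    (x := fun n => β n ⊓ M) fun n => ⟨fun _ => Nat.zero_le _, inf_le_right⟩
  -- the truncation `β n ⊓ M` agrees with `β n` on the first `n` coordinates
  have hβlim : Tendsto (β ∘ θ) atTop (𝓝 a) := by
    rw [tendsto_pi_nhds]
    intro k
    refine ((continuous_apply k).tendsto a |>.comp hlim).congr' ?_
    filter_upwards [eventually_gt_atTop k] with j hj
    exact min_eq_left (hβ (θ j) k (hj.trans_le (hθ.id_le j)))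
  obtain ⟨j, hj⟩ := (hβlim.eventually (hU.mem_nhds (hMU ha))).exists
  exact hβU (θ j) hj

/-- Choquet capacitability, for continuous images of Baire space. -/
lemma exists_isCompact_lt_measure_image [TopologicalSpace α] (σ : Measure α) [σ.OuterRegular]
    {g : (ℕ → ℕ) → α} (hg : Continuous g) {c : ℝ≥0∞} (hc : c < σ (range g)) :
    ∃ B, IsCompact B ∧ c < σ (g '' B) := by
  obtain ⟨c', hcc', hc'⟩ := exists_between hc
  obtain ⟨M, hM⟩ := exists_lt_measure_image_box σ g hc'
  refine ⟨Icc 0 M, isCompact_Icc, hcc'.trans_le ?_⟩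
  rw [Set.measure_eq_iInf_isOpen]
  refine le_iInf₂ fun O hO => le_iInf fun hOopen => ?_
  obtain ⟨n, hn⟩ := exists_box_subset_of_isOpen M (hOopen.preimage hg) (image_subset_iff.1 hO)
  exact (hM n).le.trans (measure_mono (image_subset_iff.2 hn))

end Capacity

section Uniformization

open Prod
open scoped Function

variable {α β : Type*}

lemma subset_iInter_union_iUnion_sdiff (A : ℕ → Set α) :
    A 0 ⊆ (⋂ n, A n) ∪ ⋃ n, A n \ A (n + 1) := by
  rw [iInter_union]
  refine subset_iInter fun n => ?_
  induction n with
  | zero => exact subset_union_left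
  | succ n ih =>
    refine ih.trans (union_subset (fun z hz => ?_) subset_union_right)
    by_cases h : z ∈ A (n + 1)
    exacts [Or.inl h, Or.inr (mem_iUnion.2 ⟨n, hz, h⟩)]

lemma Antitone.image_iInter_of_isCompact [TopologicalSpace α] [TopologicalSpace β] [T1Space β]
    {f : α → β} (hf : Continuous f) {A : ℕ → Set α} (hA : Antitone A) (h0 : IsCompact (A 0))
    (hcl : ∀ n, IsClosed (A n)) : f '' ⋂ n, A n = ⋂ n, f '' A n := by
  refine (image_iInter_subset A f).antisymm fun y hy => ?_
  have hclosed : IsClosed (f ⁻¹' {y}) := isClosed_singleton.preimage hf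
  obtain ⟨x, hx⟩ := IsCompact.nonempty_iInter_of_sequence_nonempty_isCompact_isClosed
    (fun n => A n ∩ f ⁻¹' {y}) (fun n => inter_subset_inter_left _ (hA n.le_succ))
    (fun n => mem_iInter.1 hy n) (h0.inter_right hclosed) fun n => (hcl n).inter hclosed
  exact ⟨x, mem_iInter.2 fun n => (mem_iInter.1 hx n).1, (mem_iInter.1 hx 0).2⟩

lemma IsCompact.exists_continuousOn_of_injOn_fst [TopologicalSpace α] [T2Space α]
    [TopologicalSpace β] [Nonempty β] {G : Set (α × β)} (hG : IsCompact G)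
    (hinj : InjOn fst G) :
    ∃ f : α → β, ContinuousOn f (fst '' G) ∧ ∀ z ∈ fst '' G, (z, f z) ∈ G := by
  classical
  let f : α → β := fun z => if h : ∃ y, (z, y) ∈ G then h.choose else Classical.arbitrary β
  have hf : ∀ z ∈ fst '' G, (z, f z) ∈ G := by
    rintro _ ⟨⟨z, y⟩, hp, rfl⟩
    have h : ∃ y, (z, y) ∈ G := ⟨y, hp⟩
    simpa only [f, dif_pos h] using h.choose_spec
  refine ⟨f, continuousOn_iff_isClosed.2 fun C hC => ?_, hf⟩
  -- on `fst '' G`, the preimage of `C` is the projection of the compact set `G ∩ snd ⁻¹' C`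
  refine ⟨fst '' (G ∩ snd ⁻¹' C),
    ((hG.inter_right (hC.preimage continuous_snd)).image continuous_fst).isClosed, ?_⟩
  ext z
  constructor
  · rintro ⟨hzC, hz⟩
    exact ⟨⟨_, ⟨hf z hz, hzC⟩, rfl⟩, hz⟩
  · rintro ⟨⟨p, ⟨hpG, hpC⟩, rfl⟩, hz⟩
    have : (p.1, f p.1) = p := hinj (hf _ hz) hpG rfl
    exact ⟨by rwa [← this] at hpC, hz⟩

variable [TopologicalSpace α] [MeasurableSpace α] [OpensMeasurableSpace α]
  (σ : Measure α) [IsFiniteMeasure σ] [σ.WeaklyRegular]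

lemma exists_isClosed_subset_pairwiseDisjoint_measure_sdiff_le {ι : Type*} [LinearOrder ι]
    [LocallyFiniteOrderBot ι] [Fintype ι] {K : ι → Set α} (hK : ∀ i, MeasurableSet (K i))
    {δ : ℝ≥0∞} (hδ : δ ≠ 0) : ∃ Q : ι → Set α, (∀ i, Q i ⊆ K i) ∧ (∀ i, IsClosed (Q i)) ∧
      Pairwise (Disjoint on Q) ∧ σ ((⋃ i, K i) \ ⋃ i, Q i) ≤ δ := by
  have hmeas : ∀ i, MeasurableSet (disjointed K i) :=
    fun i => disjointedRec (fun _ _ ht => ht.diff (hK _)) (hK i)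
  choose Q hQ hQcl hQσ using fun i => (hmeas i).exists_isClosed_sdiff_lt (measure_ne_top σ _)
    (ENNReal.div_pos hδ (ENNReal.natCast_ne_top (Fintype.card ι))).ne'
  refine ⟨Q, fun i => (hQ i).trans (disjointed_subset K i), hQcl,
    (disjoint_disjointed K).mono fun i j h => h.mono (hQ i) (hQ j), ?_⟩
  calc σ ((⋃ i, K i) \ ⋃ i, Q i) ≤ σ (⋃ i, disjointed K i \ Q i) := by
        rw [← iUnion_disjointed, iUnion_sdiff]
        exact measure_mono (iUnion_mono fun i => sdiff_subset_sdiff_right (subset_iUnion Q i))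
    _ ≤ ∑ i, σ (disjointed K i \ Q i) := measure_iUnion_fintype_le σ _
    _ ≤ ∑ _ : ι, δ / Fintype.card ι := Finset.sum_le_sum fun i _ => (hQσ i).le
    _ ≤ δ := by simpa using ENNReal.mul_div_le

lemma IsCompact.exists_subset_dist_le_of_fst_eq [T2Space α] [PseudoMetricSpace β]
    {W : Set (α × β)} (hW : IsCompact W) {r : ℝ} (hr : 0 < r) {δ : ℝ≥0∞} (hδ : δ ≠ 0) :
    ∃ W' ⊆ W, IsCompact W' ∧ σ (fst '' W \ fst '' W') ≤ δ ∧
      ∀ z y y', (z, y) ∈ W' → (z, y') ∈ W' → dist y y' ≤ r := by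
  obtain ⟨t, -, htfin, hcover⟩ := finite_cover_balls_of_compact (hW.image continuous_snd)
    (half_pos hr)
  obtain ⟨m, y, -, rfl⟩ := htfin.fin_param
  let D : Fin m → Set β := fun i => Metric.closedBall (y i) (r / 2)
  have hK : ∀ i, IsCompact (fst '' (W ∩ univ ×ˢ D i)) := fun i =>
    (hW.inter_right (isClosed_univ.prod Metric.isClosed_closedBall)).image continuous_fst
  obtain ⟨Q, hQ, hQcl, hQdisj, hQσ⟩ :=
    exists_isClosed_subset_pairwiseDisjoint_measure_sdiff_le σ
      (fun i => (hK i).isClosed.measurableSet) hδ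
  refine ⟨⋃ i, W ∩ Q i ×ˢ D i, iUnion_subset fun i => inter_subset_left,
    isCompact_iUnion fun i => hW.inter_right ((hQcl i).prod Metric.isClosed_closedBall),
    (measure_mono (sdiff_subset_sdiff ?_ ?_)).trans hQσ, ?_⟩
  · rintro _ ⟨p, hp, rfl⟩
    obtain ⟨_, ⟨i, rfl⟩, hi⟩ := mem_iUnion₂.1 (hcover (mem_image_of_mem snd hp))
    exact mem_iUnion.2 ⟨i, p, ⟨hp, trivial, Metric.ball_subset_closedBall hi⟩, rfl⟩
  · intro z hz
    obtain ⟨i, hzi⟩ := mem_iUnion.1 hz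
    obtain ⟨p, ⟨hpW, -, hpD⟩, rfl⟩ := hQ i hzi
    exact ⟨p, mem_iUnion.2 ⟨i, hpW, hzi, hpD⟩, rfl⟩
  · intro z y₁ y₂ h₁ h₂
    obtain ⟨i, -, hzi, h₁⟩ := mem_iUnion.1 h₁
    obtain ⟨j, -, hzj, h₂⟩ := mem_iUnion.1 h₂
    obtain rfl : i = j := by_contra fun hij => disjoint_left.1 (hQdisj hij) hzi hzj
    linarith [dist_triangle_right y₁ y₂ (y i), Metric.mem_closedBall.1 h₁,
      Metric.mem_closedBall.1 h₂]

/-- Refine `W` countably many times, making the fibres finer and finer while losing a summable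
amount of the measure of the projection. -/
lemma IsCompact.exists_subset_injOn_fst [T2Space α] [MetricSpace β]
    {W : Set (α × β)} (hW : IsCompact W) (hσW : σ (fst '' W) ≠ 0) :
    ∃ G ⊆ W, IsCompact G ∧ InjOn fst G ∧ σ (fst '' G) ≠ 0 := by
  obtain ⟨δ, hδ, hδW⟩ := ENNReal.exists_pos_sum_of_countable hσW ℕ
  choose R hRW hR hRσ hRdist using fun n (S : {S : Set (α × β) // IsCompact S}) =>
    S.2.exists_subset_dist_le_of_fst_eq σ (Nat.one_div_pos_of_nat (n := n))
      (ENNReal.coe_ne_zero.2 (hδ n).ne')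
  let Ws : ℕ → {S : Set (α × β) // IsCompact S} :=
    fun n => Nat.rec ⟨W, hW⟩ (fun n S => ⟨R n S, hR n S⟩) n
  let A : ℕ → Set (α × β) := fun n => (Ws n).1
  have hA : Antitone A := antitone_nat_of_succ_le fun n => hRW n (Ws n)
  have hAcl : ∀ n, IsClosed (A n) := fun n => (Ws n).2.isClosed
  refine ⟨⋂ n, A n, iInter_subset A 0,
    hW.of_isClosed_subset (isClosed_iInter hAcl) (iInter_subset A 0), ?_, fun h0 => ?_⟩
  · rintro ⟨z, y⟩ hy ⟨z', y'⟩ hy' (rfl : z = z')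
    refine Prod.ext rfl (eq_of_forall_dist_le fun ε hε => ?_)
    obtain ⟨n, hn⟩ := exists_nat_one_div_lt hε
    exact (hRdist n (Ws n) z y y' (mem_iInter.1 hy (n + 1)) (mem_iInter.1 hy' (n + 1))).trans
      hn.le
  rw [hA.image_iInter_of_isCompact continuous_fst hW hAcl] at h0
  have : σ (fst '' W) ≤ ∑' n, (δ n : ℝ≥0∞) := calc
    σ (fst '' W) ≤ σ ((⋂ n, fst '' A n) ∪ ⋃ n, fst '' A n \ fst '' A (n + 1)) :=
      measure_mono (subset_iInter_union_iUnion_sdiff fun n => fst '' A n)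
    _ ≤ σ (⋂ n, fst '' A n) + ∑' n, σ (fst '' A n \ fst '' A (n + 1)) :=
      (measure_union_le _ _).trans (add_le_add_right (measure_iUnion_le _) _)
    _ ≤ ∑' n, (δ n : ℝ≥0∞) := by
      rw [h0, zero_add]
      exact ENNReal.tsum_le_tsum fun n => hRσ n (Ws n)
  exact (this.trans_lt hδW).false

theorem MeasureTheory.AnalyticSet.exists_isCompact_continuousOn_graph_subset [T2Space α]
    [TopologicalSpace β] [TopologicalSpace.MetrizableSpace β] {G : Set (α × β)}
    (hG : AnalyticSet G) (hσG : σ (fst '' G) ≠ 0) :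
    ∃ (K : Set α) (f : α → β), IsCompact K ∧ σ K ≠ 0 ∧ ContinuousOn f K ∧
      ∀ z ∈ K, (z, f z) ∈ G := by
  let := TopologicalSpace.metrizableSpaceMetric β
  rw [AnalyticSet] at hG
  obtain rfl | ⟨φ, hφ, rfl⟩ := hG
  · simp at hσG
  obtain ⟨B, hB, hσB⟩ := exists_isCompact_lt_measure_image σ (continuous_fst.comp hφ)
    (c := 0) (by rwa [range_comp, pos_iff_ne_zero])
  obtain ⟨G', hG'B, hG', hinj, hσG'⟩ :=
    (hB.image hφ).exists_subset_injOn_fst σ (by rwa [image_image, ← pos_iff_ne_zero])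
  obtain ⟨z, hz⟩ := nonempty_of_measure_ne_zero hσG'
  obtain ⟨p, -, -⟩ := hz
  have : Nonempty β := ⟨p.2⟩
  obtain ⟨f, hf, hfG⟩ := hG'.exists_continuousOn_of_injOn_fst hinj
  exact ⟨fst '' G', f, hG'.image continuous_fst, hσG', hf,
    fun z hz => image_subset_range φ B (hG'B (hfG z hz))⟩

end Uniformization

section Eigenvectors

variable {X : Type*} [AddCommGroup X] [Module ℂ X] [TopologicalSpace X]

def eigenGraphOn (T : X →L[ℂ] X) (U : Set X) : Set (Circle × X) :=
  {p | T p.2 = (p.1 : ℂ) • p.2 ∧ p.2 ∈ U}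

lemma analyticSet_eigenGraphOn [ContinuousSMul ℂ X] [PolishSpace X] (T : X →L[ℂ] X) {U : Set X}
    (hU : IsOpen U) : AnalyticSet (eigenGraphOn T U) := by
  have hZ : IsClosed {p : Circle × X | T p.2 = (p.1 : ℂ) • p.2} :=
    isClosed_eq (T.continuous.comp continuous_snd)
      ((continuous_subtype_val.comp continuous_fst).smul continuous_snd)
  have := hZ.polishSpace
  convert (hU.preimage (continuous_snd.comp continuous_subtype_val)).analyticSet_image
    (continuous_subtype_val (p := (· ∈ {p : Circle × X | T p.2 = (p.1 : ℂ) • p.2})))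
  ext p
  exact ⟨fun hp => ⟨⟨p, hp.1⟩, hp.2, rfl⟩, by rintro ⟨q, hq, rfl⟩; exact ⟨q.2, hq⟩⟩

lemma exists_eigenvectorField_of_not_pSmall [ContinuousSMul ℂ X] [PolishSpace X]
    (T : X →L[ℂ] X) {P : Set (Measure Circle)} (hPfin : ∀ σ ∈ P, IsFiniteMeasure σ) {U : Set X}
    (hU : IsOpen U) (hA : ¬ PSmall P (Prod.fst '' eigenGraphOn T U)) :
    ∃ (Λ : Set Circle) (E : Circle → X), IsClosed Λ ∧ PPerfect P Λ ∧ ContinuousOn E Λ ∧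
      (∀ z ∈ Λ, T (E z) = (z : ℂ) • E z) ∧ Λ.Nonempty ∧ MapsTo E Λ U := by
  simp only [PSmall, not_forall] at hA
  obtain ⟨σ, hσ, hσA⟩ := hA
  have := hPfin σ hσ
  obtain ⟨K, E, hK, hσK, hE, hKE⟩ :=
    (analyticSet_eigenGraphOn T hU).exists_isCompact_continuousOn_graph_subset σ hσA
  obtain ⟨Λ, hΛK, hΛ, hΛP, hΛne⟩ := exists_pPerfect_subset hσ hK.isClosed hσK
  exact ⟨Λ, E, hΛ, hΛP, hE.mono hΛK, fun z hz => (hKE z (hΛK hz)).1, hΛne,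
    fun z hz => (hKE z (hΛK hz)).2⟩

lemma exists_eigenvectorFields_of_dense_span [IsTopologicalAddGroup X] [ContinuousSMul ℂ X]
    [PolishSpace X] (T : X →L[ℂ] X) {P : Set (Measure Circle)}
    (hPfin : ∀ σ ∈ P, IsFiniteMeasure σ)
    (H : ∀ D : Set Circle, AnalyticSet D → PSmall P D →
      Dense (↑(Submodule.span ℂ
        (⋃ z : Circle, ⋃ (_ : z ∉ D), {x : X | T x = (z : ℂ) • x})) : Set X)) :
    ∃ (Λ : ℕ → Set Circle) (E : ℕ → Circle → X),
      (∀ i, IsClosed (Λ i)) ∧ (∀ i, PPerfect P (Λ i)) ∧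
      (∀ i, ContinuousOn (E i) (Λ i)) ∧
      (∀ i, ∀ z ∈ Λ i, T (E i z) = (z : ℂ) • E i z) ∧
      Dense (↑(Submodule.span ℂ (⋃ i, E i '' Λ i)) : Set X) := by
  obtain ⟨u, hu⟩ := TopologicalSpace.exists_seq_basis X
  have hu_open : ∀ n, IsOpen (u n) := fun n => hu.isOpen (mem_range_self n)
  let A : ℕ → Set Circle := fun n => Prod.fst '' eigenGraphOn T (u n)
  have hfield : ∀ n, ∃ (Λ : Set Circle) (E : Circle → X), IsClosed Λ ∧ PPerfect P Λ ∧
      ContinuousOn E Λ ∧ (∀ z ∈ Λ, T (E z) = (z : ℂ) • E z) ∧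
      (¬ PSmall P (A n) → ∃ z ∈ Λ, E z ∈ u n) := by
    intro n
    by_cases hn : PSmall P (A n)
    · exact ⟨∅, 0, isClosed_empty, pPerfect_empty, continuousOn_empty _, by simp,
        fun h => (h hn).elim⟩
    · obtain ⟨Λ, E, hΛ, hΛP, hE, hTE, ⟨z, hz⟩, hEu⟩ :=
        exists_eigenvectorField_of_not_pSmall T hPfin (hu_open n) hn
      exact ⟨Λ, E, hΛ, hΛP, hE, hTE, fun _ => ⟨z, hz, hEu hz⟩⟩
  choose Λ E hΛ hΛP hE hTE hEu using hfield
  let D := ⋃ n : {n // PSmall P (A n)}, A n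
  have hD : AnalyticSet D := AnalyticSet.iUnion fun n =>
    (analyticSet_eigenGraphOn T (hu_open n)).image_of_continuous continuous_fst
  refine ⟨Λ, E, hΛ, hΛP, hE, hTE, dense_span_of_subset_closure_span
    (H D hD (pSmall_iUnion fun n => n.2)) ?_⟩
  simp only [iUnion_subset_iff]
  intro z hzD x hx
  refine closure_mono Submodule.subset_span (hu.mem_closure_iff.2 ?_)
  rintro _ ⟨n, rfl⟩ hxn
  have hzA : z ∈ A n := ⟨(z, x), ⟨hx, hxn⟩, rfl⟩
  obtain ⟨w, hw, hwn⟩ := hEu n fun hn => hzD (mem_iUnion.2 ⟨⟨n, hn⟩, hzA⟩)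
  exact ⟨E n w, hwn, mem_iUnion.2 ⟨n, mem_image_of_mem _ hw⟩⟩

lemma dense_span_eigenvectors_of_pPerfect [ContinuousAdd X] [ContinuousConstSMul ℂ X]
    (T : X →L[ℂ] X) {P : Set (Measure Circle)} {ι : Type*} {Λ : ι → Set Circle}
    {E : ι → Circle → X} (hΛP : ∀ i, PPerfect P (Λ i)) (hE : ∀ i, ContinuousOn (E i) (Λ i))
    (hTE : ∀ i, ∀ z ∈ Λ i, T (E i z) = (z : ℂ) • E i z)
    (hdense : Dense (↑(Submodule.span ℂ (⋃ i, E i '' Λ i)) : Set X)) {D : Set Circle}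
    (hD : PSmall P D) :
    Dense (↑(Submodule.span ℂ
      (⋃ z : Circle, ⋃ (_ : z ∉ D), {x : X | T x = (z : ℂ) • x})) : Set X) := by
  refine dense_span_of_subset_closure_span hdense (iUnion_subset fun i => ?_)
  rintro _ ⟨z, hz, rfl⟩
  have hsub : E i '' (Λ i \ D) ⊆ Submodule.span ℂ
      (⋃ z : Circle, ⋃ (_ : z ∉ D), {x : X | T x = (z : ℂ) • x}) := by
    rintro _ ⟨w, ⟨hw, hwD⟩, rfl⟩
    exact Submodule.subset_span (mem_iUnion₂.2 ⟨w, hwD, hTE i w hw⟩)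
  exact closure_mono hsub
    ((hE i z hz).mono sdiff_subset |>.mem_closure_image ((hΛP i).subset_closure_sdiff hD hz))

end Eigenvectors

theorem PPerfectlySpanning_iff_continuousEigenvectorFields_general
    {X : Type*} [AddCommGroup X] [Module ℂ X] [TopologicalSpace X]
    [IsTopologicalAddGroup X] [ContinuousSMul ℂ X] [PolishSpace X]
    (T : X →L[ℂ] X)
    (P : Set (Measure Circle)) (hPfin : ∀ σ ∈ P, IsFiniteMeasure σ) :
    (∀ D : Set Circle, AnalyticSet D → PSmall P D →
      Dense (↑(Submodule.span ℂ
        (⋃ z : Circle, ⋃ (_ : z ∉ D), {x : X | T x = (z : ℂ) • x})) : Set X)) ↔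
    (∃ (Λ : ℕ → Set Circle) (E : ℕ → Circle → X),
      (∀ i, IsClosed (Λ i)) ∧ (∀ i, PPerfect P (Λ i)) ∧
      (∀ i, ContinuousOn (E i) (Λ i)) ∧
      (∀ i, ∀ z ∈ Λ i, T (E i z) = (z : ℂ) • E i z) ∧
      Dense (↑(Submodule.span ℂ (⋃ i, E i '' Λ i)) : Set X)) :=
  ⟨exists_eigenvectorFields_of_dense_span T hPfin,
    fun ⟨_, _, _, hΛP, hE, hTE, hdense⟩ _ _ hD =>
      dense_span_eigenvectors_of_pPerfect T hΛP hE hTE hdense hD⟩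

/-- **Bayart–Matheron, Proposition 3.6.** For a family `P` of finite positive measures on the
circle which is hereditary with respect to absolute continuity, the `P`-perfect spanning
property of the unimodular eigenvectors (for analytic sets) is equivalent to the existence of
a countable family of continuous eigenvector fields defined on `P`-perfect closed sets whose
ranges have dense linear span. -/
theorem PPerfectlySpanning_iff_continuousEigenvectorFields
    {X : Type*} [AddCommGroup X] [Module ℂ X] [TopologicalSpace X]
    [IsTopologicalAddGroup X] [ContinuousSMul ℂ X] [LocallyConvexSpace ℝ X] [PolishSpace X]
    (T : X →L[ℂ] X)
    (P : Set (Measure Circle)) (hPfin : ∀ σ ∈ P, IsFiniteMeasure σ)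
    (hPher : ∀ σ ∈ P, ∀ σ' : Measure Circle, IsFiniteMeasure σ' → σ' ≪ σ → σ' ∈ P) :
    (∀ D : Set Circle, AnalyticSet D → PSmall P D →
      Dense (↑(Submodule.span ℂ
        (⋃ z : Circle, ⋃ (_ : z ∉ D), {x : X | T x = (z : ℂ) • x})) : Set X)) ↔
    (∃ (Λ : ℕ → Set Circle) (E : ℕ → Circle → X),
      (∀ i, IsClosed (Λ i)) ∧ (∀ i, PPerfect P (Λ i)) ∧
      (∀ i, ContinuousOn (E i) (Λ i)) ∧
      (∀ i, ∀ z ∈ Λ i, T (E i z) = (z : ℂ) • E i z) ∧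
      Dense (↑(Submodule.span ℂ (⋃ i, E i '' Λ i)) : Set X)) :=
  PPerfectlySpanning_iff_continuousEigenvectorFields_general T P hPfin
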